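/- arXiv:1209.2162 — 2 statements merged into one kernel-verified Lean document; each statement's English description precedes it below -/
import Mathlib

section
/- Let S be a set (of resource states), let f : S → ℝ be a function (the regularized resource monotone), and let R : S → S → ℝ assign to each ordered pair of states an asymptotic conversion rate. Assume: (i) all rates are positive, i.e. R ρ σ > 0 for all ρ, σ in S; (ii) the theory is asymptotically reversible, i.e. R ρ σ * R σ ρ = 1 for all ρ, σ in S; (iii) the monotone bounds the rates, i.e. f σ * R ρ σ ≤ f ρ for all ρ, σ in S; (iv) there exists a state ρ₀ in S with f ρ₀ > 0. Then for all ρ, σ in S, the conversion rate is the ratio of the monotone: R ρ σ = f ρ / f σ. -/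
/-- Abstract core of Theorem 1: in an asymptotically reversible resource theory,
the asymptotic conversion rate equals the ratio of the regularized monotone. -/
theorem reversible_resource_rate_eq_ratio {α : Type*} (S : Set α)
    (f : α → ℝ) (R : α → α → ℝ)
    (hpos : ∀ ρ ∈ S, ∀ σ ∈ S, 0 < R ρ σ)
    (hrev : ∀ ρ ∈ S, ∀ σ ∈ S, R ρ σ * R σ ρ = 1)
    (hmono : ∀ ρ ∈ S, ∀ σ ∈ S, f σ * R ρ σ ≤ f ρ)
    (href : ∃ ρ₀ ∈ S, 0 < f ρ₀) :
    ∀ ρ ∈ S, ∀ σ ∈ S, R ρ σ = f ρ / f σ := by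
  obtain ⟨ρ₀, hρ₀S, hρ₀⟩ := href
  have hfpos : ∀ ρ ∈ S, 0 < f ρ := by
    intro ρ hρ
    have h1 := hmono ρ hρ ρ₀ hρ₀S
    have h2 := hpos ρ hρ ρ₀ hρ₀S
    nlinarith
  intro ρ hρ σ hσ
  have h1 := hmono ρ hρ σ hσ
  have h2 := hmono σ hσ ρ hρ
  have h3 := hrev ρ hρ σ hσ
  have h4 := hpos ρ hρ σ hσ
  have hfσ := hfpos σ hσ
  have h5 : f ρ * R σ ρ * R ρ σ ≤ f σ * R ρ σ :=
    mul_le_mul_of_nonneg_right h2 h4.le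
  have h6 : f ρ * R σ ρ * R ρ σ = f ρ := by
    rw [mul_assoc, mul_comm (R σ ρ), h3, mul_one]
  have heq : f σ * R ρ σ = f ρ := le_antisymm h1 (h6 ▸ h5)
  rw [eq_div_iff hfσ.ne']
  linear_combination heq
end

section
/- Let S be a set (of resource states), let f : S → ℝ and R : S → S → ℝ satisfy: R ρ σ > 0 and R ρ σ * R σ ρ = 1 for all ρ, σ in S, and f σ * R ρ σ ≤ f ρ for all ρ, σ in S. Let ρ₀ in S satisfy f ρ₀ = 1. Then for every ρ in S, R ρ ρ₀ = f ρ, i.e. the asymptotic rate of conversion to the reference state equals the value of the monotone. -/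
/-- Normalized-reference restatement of Theorem 1: the distillation rate to a
reference state with monotone value 1 equals the monotone. -/
theorem rate_to_reference_eq_monotone {α : Type*} (S : Set α)
    (f : α → ℝ) (R : α → α → ℝ)
    (hpos : ∀ ρ ∈ S, ∀ σ ∈ S, 0 < R ρ σ)
    (hrev : ∀ ρ ∈ S, ∀ σ ∈ S, R ρ σ * R σ ρ = 1)
    (hmono : ∀ ρ ∈ S, ∀ σ ∈ S, f σ * R ρ σ ≤ f ρ)
    (ρ₀ : α) (hρ₀ : ρ₀ ∈ S) (hf₀ : f ρ₀ = 1) :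
    ∀ ρ ∈ S, R ρ ρ₀ = f ρ := by
  intro ρ hρ
  have h1 : R ρ ρ₀ ≤ f ρ := by
    have := hmono ρ hρ ρ₀ hρ₀
    rwa [hf₀, one_mul] at this
  have h2 : f ρ ≤ R ρ ρ₀ := by
    have hm := hmono ρ₀ hρ₀ ρ hρ
    rw [hf₀] at hm
    have hp := hpos ρ hρ ρ₀ hρ₀
    have hrv := hrev ρ hρ ρ₀ hρ₀
    have := mul_le_mul_of_nonneg_right hm hp.le
    calc f ρ = f ρ * R ρ₀ ρ * R ρ ρ₀ := by
              rw [mul_assoc, mul_comm (R ρ₀ ρ), hrv, mul_one]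
      _ ≤ 1 * R ρ ρ₀ := this
      _ = R ρ ρ₀ := one_mul _
  linarith
end
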